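/- Let (F^k)_{k≥1} be a sequence of maps ℝ^n → ℝ^n such that each F^k is co-coercive with constant c_k, with ρ := inf_k c_k > 1/2. Suppose all the F^k have the same nonempty zero set S = {x : F^k(x) = 0 for all k}, and that for every x ∉ S one has inf_k ‖F^k(x)‖ > 0. Then for any starting point x⁰, the sequence defined by x^k = x^{k−1} − F^k(x^{k−1}) converges to a point x* ∈ S. -/

import Mathlib

/-!
Every point `s` of the common zero set `S` is a fixed point of each step `x ↦ x - F^k x`, and
co-coercivity with constant `ρ > 1/2` makes each step decrease the squared distance to `s` by
a multiple of the squared residual: `‖x^k - s‖² + (2ρ - 1)‖F^k(x^{k-1})‖² ≤ ‖x^{k-1} - s‖²`.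
Hence the iterates are Fejér monotone with respect to `S` and the residuals tend to zero.
Since the `F^k` are uniformly `1/ρ`-Lipschitz, at a limit point `y` of the bounded iterates
`inf_k ‖F^k y‖ = 0`, so `y ∈ S`; Fejér monotonicity then upgrades subsequential convergence
to convergence.
-/

open RealInnerProductSpace Filter

/-- A map `G : ℝ^n → ℝ^n` is co-coercive with constant `c > 0` if
`⟪G x − G y, x − y⟫ ≥ c‖G x − G y‖²` for all `x, y`. -/
def CoCoercive {n : ℕ} (G : EuclideanSpace ℝ (Fin n) → EuclideanSpace ℝ (Fin n)) (c : ℝ) : Prop :=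
  0 < c ∧ ∀ x y, c * ‖G x - G y‖ ^ 2 ≤ ⟪G x - G y, x - y⟫

open Topology NNReal

section FejerMonotone

variable {X : Type*} [PseudoMetricSpace X]

def IsFejerMonotone (x : ℕ → X) (S : Set X) : Prop :=
  ∀ s ∈ S, Antitone fun k => dist (x k) s

theorem IsFejerMonotone.exists_tendsto [ProperSpace X] {x : ℕ → X} {S : Set X}
    (hx : IsFejerMonotone x S) (hS : S.Nonempty)
    (hlim : ∀ y (φ : ℕ → ℕ), StrictMono φ → Tendsto (x ∘ φ) atTop (𝓝 y) → y ∈ S) :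
    ∃ y ∈ S, Tendsto x atTop (𝓝 y) := by
  obtain ⟨s, hs⟩ := hS
  have hball : ∀ k, x k ∈ Metric.closedBall s (dist (x 0) s) :=
    fun k => hx s hs (Nat.zero_le k)
  obtain ⟨y, -, φ, hφ, hxφ⟩ := (isCompact_closedBall s _).tendsto_subseq hball
  have hy := hlim y φ hφ hxφ
  refine ⟨y, hy, ?_⟩
  rw [tendsto_iff_dist_tendsto_zero,
    tendsto_iff_tendsto_subseq_of_antitone (hx y hy) hφ.tendsto_atTop]
  exact tendsto_iff_dist_tendsto_zero.mp hxφ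

end FejerMonotone

theorem tendsto_apply_of_lipschitzWith {ι X Y : Type*} [PseudoMetricSpace X]
    [PseudoMetricSpace Y] {l : Filter ι} {G : ι → X → Y} {K : ℝ≥0}
    (hG : ∀ i, LipschitzWith K (G i)) {x : ι → X} {y : X} {z : Y}
    (hx : Tendsto x l (𝓝 y)) (hGx : Tendsto (fun i => G i (x i)) l (𝓝 z)) :
    Tendsto (fun i => G i y) l (𝓝 z) := by
  rw [tendsto_iff_dist_tendsto_zero] at hx hGx ⊢
  have hbound : Tendsto (fun i => K * dist (x i) y + dist (G i (x i)) z) l (𝓝 0) := by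
    simpa using (hx.const_mul (K : ℝ)).add hGx
  refine squeeze_zero (fun _ => dist_nonneg) (fun i => ?_) hbound
  calc dist (G i y) z ≤ dist (G i y) (G i (x i)) + dist (G i (x i)) z := dist_triangle _ _ _
    _ ≤ K * dist (x i) y + dist (G i (x i)) z := by
      gcongr
      rw [dist_comm (x i)]
      exact (hG i).dist_le_mul _ _

theorem tendsto_zero_of_add_le_of_nonneg {a b : ℕ → ℝ} (ha : ∀ k, 0 ≤ a k) (hb : ∀ k, 0 ≤ b k)
    (hab : ∀ k, a (k + 1) + b k ≤ a k) : Tendsto b atTop (𝓝 0) := by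
  have hanti : Antitone a := antitone_nat_of_succ_le fun k => by linarith [hab k, hb k]
  have hconv := tendsto_atTop_ciInf hanti ⟨0, by rintro _ ⟨k, rfl⟩; exact ha k⟩
  have hdiff : Tendsto (fun k => a k - a (k + 1)) atTop (𝓝 0) := by
    simpa using hconv.sub (hconv.comp (tendsto_add_atTop_nat 1))
  exact squeeze_zero hb (fun k => by linarith [hab k]) hdiff

namespace CoCoercive

variable {n : ℕ} {G : EuclideanSpace ℝ (Fin n) → EuclideanSpace ℝ (Fin n)} {c : ℝ}

theorem mono (hG : CoCoercive G c) {c' : ℝ} (hc' : 0 < c') (h : c' ≤ c) : CoCoercive G c' :=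
  ⟨hc', fun x y => le_trans (by gcongr) (hG.2 x y)⟩

theorem lipschitzWith (hG : CoCoercive G c) : LipschitzWith (Real.toNNReal c⁻¹) G := by
  refine LipschitzWith.of_dist_le_mul fun x y => ?_
  rw [Real.coe_toNNReal _ (inv_nonneg.2 hG.1.le), dist_eq_norm, dist_eq_norm,
    ← div_eq_inv_mul, le_div_iff₀ hG.1]
  have h := (hG.2 x y).trans (real_inner_le_norm _ _)
  rcases (norm_nonneg (G x - G y)).eq_or_lt with h0 | h0
  · rw [← h0, zero_mul]
    exact norm_nonneg _
  · nlinarith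

theorem norm_sub_sub_sq_add_le (hG : CoCoercive G c) {s : EuclideanSpace ℝ (Fin n)}
    (hs : G s = 0) (x : EuclideanSpace ℝ (Fin n)) :
    ‖x - G x - s‖ ^ 2 + (2 * c - 1) * ‖G x‖ ^ 2 ≤ ‖x - s‖ ^ 2 := by
  have h := hG.2 x s
  rw [hs, sub_zero, real_inner_comm] at h
  rw [sub_right_comm, norm_sub_sq_real]
  linarith

end CoCoercive

/-- Convergence lemma (after Facchinei–Pang, Lemma 12.1.5): if each `F^k` is co-coercive
with constant `c_k`, `ρ = inf_k c_k > 1/2`, all `F^k` share the same nonempty zero set `S`,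
and `inf_k ‖F^k(x)‖ > 0` for every `x ∉ S`, then the iteration `x^k = x^{k−1} − F^k(x^{k−1})`
converges to a point of `S` from any starting point. -/
theorem sequence_cocoercive_convergence {n : ℕ}
    (F : ℕ → EuclideanSpace ℝ (Fin n) → EuclideanSpace ℝ (Fin n)) (c : ℕ → ℝ)
    (hF : ∀ k, CoCoercive (F k) (c k))
    (ρ : ℝ) (hρ : 1 / 2 < ρ) (hρc : ∀ k, ρ ≤ c k)
    (S : Set (EuclideanSpace ℝ (Fin n)))
    (hS : S = {x | ∀ k, F k x = 0}) (hSne : S.Nonempty)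
    (hsep : ∀ x ∉ S, 0 < ⨅ k, ‖F k x‖)
    (x : ℕ → EuclideanSpace ℝ (Fin n))
    (hiter : ∀ k, x (k + 1) = x k - F (k + 1) (x k)) :
    ∃ xstar ∈ S, Tendsto x atTop (nhds xstar) := by
  subst hS
  have hgap : 0 < 2 * ρ - 1 := by linarith
  have hFρ : ∀ k, CoCoercive (F k) ρ := fun k => (hF k).mono (by linarith) (hρc k)
  have hdescent : ∀ s ∈ {x | ∀ k, F k x = 0}, ∀ k,
      ‖x (k + 1) - s‖ ^ 2 + (2 * ρ - 1) * ‖F (k + 1) (x k)‖ ^ 2 ≤ ‖x k - s‖ ^ 2 :=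
    fun s hs k => hiter k ▸ (hFρ (k + 1)).norm_sub_sub_sq_add_le (hs (k + 1)) (x k)
  have hres : Tendsto (fun k => F (k + 1) (x k)) atTop (𝓝 0) := by
    obtain ⟨s, hs⟩ := hSne
    have hsq := tendsto_zero_of_add_le_of_nonneg (fun k => sq_nonneg ‖x k - s‖)
      (fun k => by positivity) (hdescent s hs)
    rw [tendsto_zero_iff_norm_tendsto_zero]
    simpa [hgap.ne'] using (hsq.const_mul (2 * ρ - 1)⁻¹).sqrt
  refine IsFejerMonotone.exists_tendsto (fun s hs => antitone_nat_of_succ_le fun k => ?_) hSne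
    fun y φ hφ hxφ => ?_
  · rw [dist_eq_norm, dist_eq_norm,
      ← pow_le_pow_iff_left₀ (norm_nonneg _) (norm_nonneg _) two_ne_zero]
    exact le_of_add_le_of_nonneg_left (hdescent s hs k) (by positivity)
  · by_contra hy
    have hFy := tendsto_apply_of_lipschitzWith (fun j => (hFρ (φ j + 1)).lipschitzWith) hxφ
      (hres.comp hφ.tendsto_atTop)
    have hbdd : BddBelow (Set.range fun k => ‖F k y‖) := ⟨0, by rintro _ ⟨k, rfl⟩; positivity⟩
    have hinf := ge_of_tendsto' hFy.norm fun j => ciInf_le hbdd (φ j + 1)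
    rw [norm_zero] at hinf
    exact (hsep y hy).not_ge hinf
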